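/- arXiv:2404.12082 — 7 statements merged into one kernel-verified Lean document; each statement's English description precedes it below -/
import Mathlib

section
/- The 6-cycle C_6 does not admit a representation by points on the unit circle where two vertices are adjacent if and only if the angle between their points is strictly greater than 2π/3. -/
/-- A circular representation of a graph: vertices are placed on the unit circle
(positions measured in units of the circumference), and two distinct vertices are
adjacent iff both circular arcs between their points have length strictly greater
than 1/3 of the circumference (equivalently, the angle between them exceeds 2π/3). -/
def CircRep {V : Type*} (G : SimpleGraph V) (θ : V → ℝ) : Prop :=
  ∀ x y : V, x ≠ y →
    (G.Adj x y ↔ 1/3 < Int.fract (θ x - θ y) ∧ Int.fract (θ x - θ y) < 2/3)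

/-- The 6-cycle `C₆`. -/
def C6 : SimpleGraph (ZMod 6) :=
  SimpleGraph.fromRel (fun i j => j = i + 1)

private lemma fract_key (x y z w : ℝ) :
    Int.fract (w - x) =
      Int.fract (Int.fract (y - x) + Int.fract (z - y) + Int.fract (w - z)) := by
  conv_lhs => rw [show w - x =
    (Int.fract (y - x) + Int.fract (z - y) + Int.fract (w - z)) +
      ((⌊y - x⌋ + ⌊z - y⌋ + ⌊w - z⌋ : ℤ) : ℝ) by
      simp only [Int.fract]; push_cast; ring]
  rw [Int.fract_add_intCast]

private lemma fract_shift (s : ℝ) (h1 : 1 ≤ s) (h2 : s < 2) :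
    Int.fract s = s - 1 := by
  rw [show s = (s - 1) + ((1 : ℤ) : ℝ) by push_cast; ring, Int.fract_add_intCast,
    Int.fract_eq_self.2 ⟨by linarith, by linarith⟩]
  push_cast; ring

set_option maxHeartbeats 1000000 in
theorem C6_not_circular : ¬ ∃ θ : ZMod 6 → ℝ, CircRep C6 θ := by
  rintro ⟨θ, h⟩
  set d0 := Int.fract (θ 1 - θ 0) with hd0def
  set d1 := Int.fract (θ 2 - θ 1) with hd1def
  set d2 := Int.fract (θ 3 - θ 2) with hd2def
  set d3 := Int.fract (θ 4 - θ 3) with hd3def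
  set d4 := Int.fract (θ 5 - θ 4) with hd4def
  set d5 := Int.fract (θ 0 - θ 5) with hd5def
  have hb0 : 1/3 < d0 ∧ d0 < 2/3 := (h 1 0 (by decide)).1 (by simp only [C6, SimpleGraph.fromRel_adj]; decide)
  have hb1 : 1/3 < d1 ∧ d1 < 2/3 := (h 2 1 (by decide)).1 (by simp only [C6, SimpleGraph.fromRel_adj]; decide)
  have hb2 : 1/3 < d2 ∧ d2 < 2/3 := (h 3 2 (by decide)).1 (by simp only [C6, SimpleGraph.fromRel_adj]; decide)
  have hb3 : 1/3 < d3 ∧ d3 < 2/3 := (h 4 3 (by decide)).1 (by simp only [C6, SimpleGraph.fromRel_adj]; decide)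
  have hb4 : 1/3 < d4 ∧ d4 < 2/3 := (h 5 4 (by decide)).1 (by simp only [C6, SimpleGraph.fromRel_adj]; decide)
  have hb5 : 1/3 < d5 ∧ d5 < 2/3 := (h 0 5 (by decide)).1 (by simp only [C6, SimpleGraph.fromRel_adj]; decide)
  -- total sum around the cycle is an integer in (2,4), hence 3
  have hsum : d0 + d1 + d2 + d3 + d4 + d5 = 3 := by
    have hint : d0 + d1 + d2 + d3 + d4 + d5 =
        -((⌊θ 1 - θ 0⌋ + ⌊θ 2 - θ 1⌋ + ⌊θ 3 - θ 2⌋ + ⌊θ 4 - θ 3⌋ +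
          ⌊θ 5 - θ 4⌋ + ⌊θ 0 - θ 5⌋ : ℤ) : ℝ) := by
      simp only [hd0def, hd1def, hd2def, hd3def, hd4def, hd5def, Int.fract]
      push_cast; ring
    set n : ℤ := ⌊θ 1 - θ 0⌋ + ⌊θ 2 - θ 1⌋ + ⌊θ 3 - θ 2⌋ + ⌊θ 4 - θ 3⌋ +
          ⌊θ 5 - θ 4⌋ + ⌊θ 0 - θ 5⌋ with hn
    have h1 : (2:ℝ) < -(n:ℝ) := by rw [← hint]; linarith [hb0.1, hb1.1, hb2.1, hb3.1, hb4.1, hb5.1]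
    have h2 : -(n:ℝ) < 4 := by rw [← hint]; linarith [hb0.2, hb1.2, hb2.2, hb3.2, hb4.2, hb5.2]
    have hn3 : n = -3 := by
      have a1 : (2:ℤ) < -n := by exact_mod_cast h1
      have a2 : -n < 4 := by exact_mod_cast h2
      omega
    rw [hint, hn3]; norm_num
  -- partial sums at distance 3
  have hs0 : Int.fract (θ 3 - θ 0) = (d0 + d1 + d2) - 1 := by
    rw [fract_key (θ 0) (θ 1) (θ 2) (θ 3), ← hd0def, ← hd1def, ← hd2def]
    exact fract_shift _ (by linarith [hb0.1, hb1.1, hb2.1]) (by linarith [hb0.2, hb1.2, hb2.2])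
  have hs1 : Int.fract (θ 4 - θ 1) = (d1 + d2 + d3) - 1 := by
    rw [fract_key (θ 1) (θ 2) (θ 3) (θ 4), ← hd1def, ← hd2def, ← hd3def]
    exact fract_shift _ (by linarith [hb1.1, hb2.1, hb3.1]) (by linarith [hb1.2, hb2.2, hb3.2])
  have hs2 : Int.fract (θ 5 - θ 2) = (d2 + d3 + d4) - 1 := by
    rw [fract_key (θ 2) (θ 3) (θ 4) (θ 5), ← hd2def, ← hd3def, ← hd4def]
    exact fract_shift _ (by linarith [hb2.1, hb3.1, hb4.1]) (by linarith [hb2.2, hb3.2, hb4.2])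
  have hs3 : Int.fract (θ 0 - θ 3) = (d3 + d4 + d5) - 1 := by
    rw [fract_key (θ 3) (θ 4) (θ 5) (θ 0), ← hd3def, ← hd4def, ← hd5def]
    exact fract_shift _ (by linarith [hb3.1, hb4.1, hb5.1]) (by linarith [hb3.2, hb4.2, hb5.2])
  -- non-adjacency constraints
  have hna0 : ¬ (1/3 < Int.fract (θ 3 - θ 0) ∧ Int.fract (θ 3 - θ 0) < 2/3) :=
    fun hc => (by simp only [C6, SimpleGraph.fromRel_adj]; decide : ¬ C6.Adj 3 0) ((h 3 0 (by decide)).2 hc)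
  have hna1 : ¬ (1/3 < Int.fract (θ 4 - θ 1) ∧ Int.fract (θ 4 - θ 1) < 2/3) :=
    fun hc => (by simp only [C6, SimpleGraph.fromRel_adj]; decide : ¬ C6.Adj 4 1) ((h 4 1 (by decide)).2 hc)
  have hna2 : ¬ (1/3 < Int.fract (θ 5 - θ 2) ∧ Int.fract (θ 5 - θ 2) < 2/3) :=
    fun hc => (by simp only [C6, SimpleGraph.fromRel_adj]; decide : ¬ C6.Adj 5 2) ((h 5 2 (by decide)).2 hc)
  have hna3 : ¬ (1/3 < Int.fract (θ 0 - θ 3) ∧ Int.fract (θ 0 - θ 3) < 2/3) :=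
    fun hc => (by simp only [C6, SimpleGraph.fromRel_adj]; decide : ¬ C6.Adj 0 3) ((h 0 3 (by decide)).2 hc)
  rw [hs0] at hna0; rw [hs1] at hna1; rw [hs2] at hna2; rw [hs3] at hna3
  have c0 : d0 + d1 + d2 ≤ 4/3 ∨ 5/3 ≤ d0 + d1 + d2 := by
    by_contra hc; push_neg at hc; exact hna0 ⟨by linarith [hc.1], by linarith [hc.2]⟩
  have c1 : d1 + d2 + d3 ≤ 4/3 ∨ 5/3 ≤ d1 + d2 + d3 := by
    by_contra hc; push_neg at hc; exact hna1 ⟨by linarith [hc.1], by linarith [hc.2]⟩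
  have c2 : d2 + d3 + d4 ≤ 4/3 ∨ 5/3 ≤ d2 + d3 + d4 := by
    by_contra hc; push_neg at hc; exact hna2 ⟨by linarith [hc.1], by linarith [hc.2]⟩
  have c3 : d3 + d4 + d5 ≤ 4/3 ∨ 5/3 ≤ d3 + d4 + d5 := by
    by_contra hc; push_neg at hc; exact hna3 ⟨by linarith [hc.1], by linarith [hc.2]⟩
  rcases c0 with c0 | c0 <;> rcases c1 with c1 | c1 <;> rcases c2 with c2 | c2 <;>
    rcases c3 with c3 | c3 <;>
    linarith [hb0.1, hb0.2, hb1.1, hb1.2, hb2.1, hb2.2, hb3.1, hb3.2, hb4.1, hb4.2, hb5.1, hb5.2]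
end

section
/- The graph K_1 + C_5 (disjoint union of an isolated vertex and a 5-cycle) does not admit a representation by points on the unit circle where two vertices are adjacent if and only if the angle between their points is strictly greater than 2π/3. -/
/-- The graph `K₁ + C₅`: vertex 0 is isolated and 1,2,3,4,5 form a 5-cycle. -/
def K1plusC5 : SimpleGraph (Fin 6) :=
  SimpleGraph.fromRel (fun i j =>
    (i = 1 ∧ j = 2) ∨ (i = 2 ∧ j = 3) ∨ (i = 3 ∧ j = 4) ∨ (i = 4 ∧ j = 5) ∨ (i = 5 ∧ j = 1))

lemma frac_sub_eq (x y : ℝ) :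
    Int.fract (x - y) = Int.fract (Int.fract x - Int.fract y) := by
  have h : x - y = (Int.fract x - Int.fract y) + ((⌊x⌋ - ⌊y⌋ : ℤ) : ℝ) := by
    rw [Int.fract, Int.fract]; push_cast; ring
  rw [h, Int.fract_add_intCast]

lemma key (a b : ℝ) (ha0 : 0 ≤ a) (ha1 : a < 1) (hb0 : 0 ≤ b) (hb1 : b < 1)
    (h : (a ≤ 1/3 ∧ b ≤ 1/3) ∨ (2/3 ≤ a ∧ 2/3 ≤ b)) :
    ¬ (1/3 < Int.fract (a - b) ∧ Int.fract (a - b) < 2/3) := by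
  rintro ⟨h1, h2⟩
  rcases le_or_gt b a with hab | hab
  · rw [Int.fract_eq_self.2 ⟨by linarith, by linarith⟩] at h1 h2
    rcases h with ⟨p, q⟩ | ⟨p, q⟩ <;> linarith
  · have e := Int.fract_add_intCast (a - b) (1 : ℤ)
    push_cast at e
    have e2 : Int.fract (a - b) = a - b + 1 := by
      rw [← e, Int.fract_eq_self.2 ⟨by linarith, by linarith⟩]
    rw [e2] at h1 h2
    rcases h with ⟨p, q⟩ | ⟨p, q⟩ <;> linarith

theorem K1plusC5_not_circular : ¬ ∃ θ : Fin 6 → ℝ, CircRep K1plusC5 θ := by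
  rintro ⟨θ, h⟩
  set f : Fin 6 → ℝ := fun i => Int.fract (θ i - θ 0) with hf
  have hfr : ∀ i j : Fin 6, Int.fract (θ i - θ j) = Int.fract (f i - f j) := by
    intro i j
    have : θ i - θ j = (θ i - θ 0) - (θ j - θ 0) := by ring
    rw [this, frac_sub_eq]
  have hf0 : ∀ i, 0 ≤ f i := fun i => Int.fract_nonneg _
  have hf1 : ∀ i, f i < 1 := fun i => Int.fract_lt_one _
  -- non-adjacency to 0
  have hside : ∀ i : Fin 6, i ≠ 0 → (f i ≤ 1/3 ∨ 2/3 ≤ f i) := by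
    intro i hi
    have hna : ¬ K1plusC5.Adj i 0 := by
      rw [K1plusC5, SimpleGraph.fromRel_adj]
      fin_cases i <;> decide
    have := (h i 0 hi).not.1 hna
    rw [hfr i 0] at this
    have hval : f 0 = 0 := by simp [hf, Int.fract_zero]
    rw [hval, sub_zero, Int.fract_eq_self.2 ⟨hf0 i, hf1 i⟩] at this
    by_contra hc
    push_neg at hc
    exact this ⟨hc.1, hc.2⟩
  have hedge : ∀ i j : Fin 6, K1plusC5.Adj i j →
      ¬ ((f i ≤ 1/3 ∧ f j ≤ 1/3) ∨ (2/3 ≤ f i ∧ 2/3 ≤ f j)) := by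
    intro i j hadj hc
    have hne : i ≠ j := hadj.ne
    have := (h i j hne).1 hadj
    rw [hfr i j] at this
    exact key (f i) (f j) (hf0 i) (hf1 i) (hf0 j) (hf1 j) hc this
  have a12 : K1plusC5.Adj 1 2 := by rw [K1plusC5, SimpleGraph.fromRel_adj]; decide
  have a23 : K1plusC5.Adj 2 3 := by rw [K1plusC5, SimpleGraph.fromRel_adj]; decide
  have a34 : K1plusC5.Adj 3 4 := by rw [K1plusC5, SimpleGraph.fromRel_adj]; decide
  have a45 : K1plusC5.Adj 4 5 := by rw [K1plusC5, SimpleGraph.fromRel_adj]; decide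
  have a51 : K1plusC5.Adj 5 1 := by rw [K1plusC5, SimpleGraph.fromRel_adj]; decide
  have s1 := hside 1 (by decide)
  have s2 := hside 2 (by decide)
  have s3 := hside 3 (by decide)
  have s4 := hside 4 (by decide)
  have s5 := hside 5 (by decide)
  have e12 := hedge 1 2 a12
  have e23 := hedge 2 3 a23
  have e34 := hedge 3 4 a34
  have e45 := hedge 4 5 a45
  have e51 := hedge 5 1 a51
  -- adjacency forces opposite sides; odd cycle contradiction
  rcases s1 with h1 | h1 <;> rcases s2 with h2 | h2 <;> rcases s3 with h3 | h3 <;>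
    rcases s4 with h4 | h4 <;> rcases s5 with h5 | h5 <;>
  first
  | exact e12 (Or.inl ⟨h1, h2⟩) | exact e12 (Or.inr ⟨h1, h2⟩)
  | exact e23 (Or.inl ⟨h2, h3⟩) | exact e23 (Or.inr ⟨h2, h3⟩)
  | exact e34 (Or.inl ⟨h3, h4⟩) | exact e34 (Or.inr ⟨h3, h4⟩)
  | exact e45 (Or.inl ⟨h4, h5⟩) | exact e45 (Or.inr ⟨h4, h5⟩)
  | exact e51 (Or.inl ⟨h5, h1⟩) | exact e51 (Or.inr ⟨h5, h1⟩)
end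

section
/- For every positive integer k, the circular complete graph K_{3k-1,k} is a maximal triangle-free graph: it is triangle-free, and any two distinct non-adjacent vertices have a common neighbour. -/
/-- The circular complete graph `K_{p,q}`: vertex set `{0,…,p-1}` with an edge
between `i` and `j` iff `q ≤ |i - j| ≤ p - q`. -/
def circularComplete (p q : ℕ) : SimpleGraph (Fin p) :=
  SimpleGraph.fromRel (fun i j =>
    (q : ℤ) ≤ |(i.val : ℤ) - (j.val : ℤ)| ∧ |(i.val : ℤ) - (j.val : ℤ)| ≤ (p : ℤ) - (q : ℤ))

lemma cc_adj (p q : ℕ) (x y : Fin p) :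
    (circularComplete p q).Adj x y ↔ x.val ≠ y.val ∧
      ((q : ℤ) ≤ |(x.val : ℤ) - (y.val : ℤ)| ∧ |(x.val : ℤ) - (y.val : ℤ)| ≤ (p : ℤ) - q) := by
  simp only [circularComplete, SimpleGraph.fromRel_adj, ne_eq, Fin.ext_iff]
  constructor
  · rintro ⟨h1, h2 | h2⟩
    · exact ⟨h1, h2⟩
    · rw [abs_sub_comm]; exact ⟨h1, h2⟩
  · rintro ⟨h1, h2⟩; exact ⟨h1, Or.inl h2⟩

lemma cc_common (k : ℕ) (hk : 0 < k) (x y : Fin (3 * k - 1)) (hlt : x.val < y.val)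
    (h : ¬ (circularComplete (3 * k - 1) k).Adj x y) :
    ∃ z, (circularComplete (3 * k - 1) k).Adj x z ∧ (circularComplete (3 * k - 1) k).Adj y z := by
  rw [cc_adj] at h
  have hy := y.isLt
  have hx := x.isLt
  have hne : x.val ≠ y.val := by omega
  have habs : |(x.val : ℤ) - (y.val : ℤ)| = (y.val : ℤ) - x.val := by
    rw [abs_sub_comm]; exact abs_of_nonneg (by push_cast; omega)
  rw [habs] at h
  have hd : y.val - x.val < k ∨ 3 * k - 1 - k < y.val - x.val := by omega
  rcases hd with hd | hd
  · by_cases hc : y.val + k < 3 * k - 1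
    · refine ⟨⟨y.val + k, hc⟩, ?_, ?_⟩ <;>
        · rw [cc_adj]
          refine ⟨by simp; omega, ?_⟩
          simp only [le_abs, abs_le]
          push_cast
          omega
    · refine ⟨⟨y.val + k - (3 * k - 1), by omega⟩, ?_, ?_⟩ <;>
        · rw [cc_adj]
          refine ⟨by simp; omega, ?_⟩
          simp only [le_abs, abs_le]
          push_cast
          omega
  · refine ⟨⟨x.val + k, by omega⟩, ?_, ?_⟩ <;>
      · rw [cc_adj]
        refine ⟨by simp; omega, ?_⟩
        simp only [le_abs, abs_le]
        push_cast
        omega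

/-- `K_{3k-1,k}` is maximal triangle-free: triangle-free, and every two distinct
non-adjacent vertices have a common neighbour. -/
theorem circularComplete_maximalTriangleFree (k : ℕ) (hk : 0 < k) :
    (circularComplete (3 * k - 1) k).CliqueFree 3 ∧
    ∀ x y : Fin (3 * k - 1), x ≠ y → ¬ (circularComplete (3 * k - 1) k).Adj x y →
      ∃ z, (circularComplete (3 * k - 1) k).Adj x z ∧ (circularComplete (3 * k - 1) k).Adj y z := by
  constructor
  · intro s hs
    rw [SimpleGraph.is3Clique_iff] at hs
    obtain ⟨a, b, c, hab, hac, hbc, -⟩ := hs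
    rw [cc_adj] at hab hac hbc
    have ha := a.isLt; have hb := b.isLt; have hc := c.isLt
    simp only [le_abs, abs_le] at hab hac hbc
    omega
  · intro x y hxy hadj
    rcases lt_or_gt_of_ne (show x.val ≠ y.val from fun h => hxy (Fin.ext h)) with h | h
    · exact cc_common k hk x y h hadj
    · obtain ⟨z, h1, h2⟩ := cc_common k hk y x h (fun a => hadj a.symm)
      exact ⟨z, h2, h1⟩
end

section
/- Let G be a finite graph that is K_3-free, (K_1+2K_2)-free, and C_6-free (as induced subgraphs), and let I be a maximal independent set of vertices of G. Then the graph G' obtained from G by adding a new vertex v' adjacent exactly to the vertices of I contains no induced 6-cycle. -/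
/-- The graph `K₁ + 2K₂`: vertex 0 is isolated, with edges 1-2 and 3-4. -/
def K1plus2K2 : SimpleGraph (Fin 5) :=
  SimpleGraph.fromRel (fun i j => (i = 1 ∧ j = 2) ∨ (i = 3 ∧ j = 4))

/-- `I` is an independent set of vertices of `G`. -/
def IsIndep {V : Type*} (G : SimpleGraph V) (I : Set V) : Prop :=
  ∀ x ∈ I, ∀ y ∈ I, ¬ G.Adj x y

/-- The graph obtained from `G` by adding a new vertex (`none`) adjacent exactly to
the vertices of `I`. -/
def addVertex {V : Type*} (G : SimpleGraph V) (I : Set V) : SimpleGraph (Option V) :=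
  SimpleGraph.fromRel (fun a b =>
    (∃ x y, a = some x ∧ b = some y ∧ G.Adj x y) ∨ (a = none ∧ ∃ x ∈ I, b = some x))

/-!
If an induced `C₆` of `G'` avoids the new vertex, it is an induced `C₆` of `G`. Otherwise its other
five vertices form an induced path `a - b - c - d - e` of `G` with `a, e ∈ I` and `c ∉ I`. By
maximality `c` has a neighbour `x ∈ I`; `x` misses `a` and `e` because `I` is independent, and misses
`b` and `d` because `G` is triangle-free, so `x` with the edges `ab` and `de` is an induced
`K₁ + 2K₂`.
-/

open SimpleGraph

lemma SimpleGraph.CliqueFree.not_adj_of_adj_of_adj {V : Type*} {G : SimpleGraph V}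
    (h : G.CliqueFree 3) {u v w : V} (huv : G.Adj u v) (hvw : G.Adj v w) : ¬ G.Adj u w :=
  fun huw => by classical exact h {u, v, w} (is3Clique_triple_iff.mpr ⟨huv, huw, hvw⟩)

/-- `hH` says that `H` has no twins, which makes every adjacency-reflecting map injective. -/
lemma SimpleGraph.nonempty_embedding_of_adj_iff {W V : Type*} {H : SimpleGraph W}
    {G : SimpleGraph V} (hH : ∀ i j, (∀ k, H.Adj i k ↔ H.Adj j k) → i = j) (f : W → V)
    (hf : ∀ i j, G.Adj (f i) (f j) ↔ H.Adj i j) : Nonempty (H ↪g G) :=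
  ⟨⟨⟨f, fun i j hij => hH i j fun k => by rw [← hf, ← hf, hij]⟩, hf _ _⟩⟩

lemma C6_adj_iff (i j : ZMod 6) : C6.Adj i j ↔ i ≠ j ∧ (j = i + 1 ∨ i = j + 1) :=
  fromRel_adj _ _ _

instance : DecidableRel C6.Adj := fun i j => decidable_of_iff _ (C6_adj_iff i j).symm

def rotateC6 (k : ZMod 6) : C6 ≃g C6 where
  toEquiv := Equiv.addRight k
  map_rel_iff' {i j} := by
    simp only [C6_adj_iff, Equiv.coe_addRight, add_right_comm _ k 1, add_left_inj, ne_eq]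

lemma K1plus2K2_adj_iff (i j : Fin 5) : K1plus2K2.Adj i j ↔
    i ≠ j ∧ ((i = 1 ∧ j = 2) ∨ (i = 3 ∧ j = 4) ∨ (j = 1 ∧ i = 2) ∨ (j = 3 ∧ i = 4)) := by
  simp only [K1plus2K2, fromRel_adj, or_assoc]

instance : DecidableRel K1plus2K2.Adj := fun i j => decidable_of_iff _ (K1plus2K2_adj_iff i j).symm

lemma nonempty_K1plus2K2_embedding {V : Type*} {G : SimpleGraph V} {x a b d e : V}
    (hab : G.Adj a b) (hde : G.Adj d e) (hxa : ¬ G.Adj x a) (hxb : ¬ G.Adj x b)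
    (hxd : ¬ G.Adj x d) (hxe : ¬ G.Adj x e) (had : ¬ G.Adj a d) (hae : ¬ G.Adj a e)
    (hbd : ¬ G.Adj b d) (hbe : ¬ G.Adj b e) : Nonempty (K1plus2K2 ↪g G) := by
  refine nonempty_embedding_of_adj_iff (by decide) ![x, a, b, d, e] fun i j => ?_
  fin_cases i <;> fin_cases j <;> simp [*, G.adj_comm] <;> decide

section

variable {V : Type*} {G : SimpleGraph V} {I : Set V}

lemma exists_mem_adj_of_notMem (hind : IsIndep G I)
    (hmax : ∀ J : Set V, IsIndep G J → I ⊆ J → J = I) {c : V} (hc : c ∉ I) :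
    ∃ x ∈ I, G.Adj x c := by
  by_contra! h
  have hJ : IsIndep G (insert c I) := by
    rintro p (rfl | hp) q (rfl | hq)
    · exact G.irrefl
    · exact fun hpq => h q hq hpq.symm
    · exact h p hp
    · exact hind p hp q hq
  exact hc (hmax _ hJ (Set.subset_insert c I) ▸ Set.mem_insert c I)

lemma nonempty_K1plus2K2_embedding_of_path (hK3 : G.CliqueFree 3) (hind : IsIndep G I)
    (hmax : ∀ J : Set V, IsIndep G J → I ⊆ J → J = I) {a b c d e : V}
    (hab : G.Adj a b) (hbc : G.Adj b c) (hcd : G.Adj c d) (hde : G.Adj d e)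
    (had : ¬ G.Adj a d) (hae : ¬ G.Adj a e) (hbd : ¬ G.Adj b d) (hbe : ¬ G.Adj b e)
    (ha : a ∈ I) (he : e ∈ I) (hc : c ∉ I) : Nonempty (K1plus2K2 ↪g G) := by
  obtain ⟨x, hx, hxc⟩ := exists_mem_adj_of_notMem hind hmax hc
  exact nonempty_K1plus2K2_embedding hab hde (hind x hx a ha)
    (hK3.not_adj_of_adj_of_adj hxc hbc.symm) (hK3.not_adj_of_adj_of_adj hxc hcd)
    (hind x hx e he) had hae hbd hbe

@[simp]
lemma addVertex_adj_some_some {x y : V} : (addVertex G I).Adj (some x) (some y) ↔ G.Adj x y := by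
  simpa [addVertex, fromRel_adj, G.adj_comm y x] using fun h => h.ne

@[simp]
lemma addVertex_adj_none_some {x : V} : (addVertex G I).Adj none (some x) ↔ x ∈ I := by
  simp [addVertex, fromRel_adj]

namespace addVertex

variable {W : Type*} {H : SimpleGraph W} (f : H ↪g addVertex G I)

lemma adj_iff_of_apply_eq_some {i j : W} {u v : V} (hu : f i = some u) (hv : f j = some v) :
    G.Adj u v ↔ H.Adj i j := by
  rw [← addVertex_adj_some_some, ← hu, ← hv, f.map_rel_iff]

lemma nonempty_embedding_of_forall_ne_none (hf : ∀ i, f i ≠ none) : Nonempty (H ↪g G) := by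
  let g (i : W) : V := (f i).get (Option.isSome_iff_ne_none.mpr (hf i))
  have hg (i : W) : f i = some (g i) := (Option.some_get _).symm
  exact ⟨⟨⟨g, fun i j hij => f.injective (by rw [hg, hg, hij])⟩,
    adj_iff_of_apply_eq_some f (hg _) (hg _)⟩⟩

lemma mem_iff_of_apply_eq_none {i j : W} {u : V} (hi : f i = none) (hu : f j = some u) :
    u ∈ I ↔ H.Adj i j := by
  rw [← addVertex_adj_none_some, ← hi, ← hu, f.map_rel_iff]

end addVertex

lemma nonempty_K1plus2K2_embedding_of_apply_zero_eq_none (hK3 : G.CliqueFree 3)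
    (hind : IsIndep G I) (hmax : ∀ J : Set V, IsIndep G J → I ⊆ J → J = I)
    (f : C6 ↪g addVertex G I) (h0 : f 0 = none) : Nonempty (K1plus2K2 ↪g G) := by
  have hsome (k : ZMod 6) (hk : k ≠ 0) : ∃ v, f k = some v :=
    Option.ne_none_iff_exists'.mp fun h => hk (f.injective (h.trans h0.symm))
  obtain ⟨a, ha⟩ := hsome 1 (by decide)
  obtain ⟨b, hb⟩ := hsome 2 (by decide)
  obtain ⟨c, hc⟩ := hsome 3 (by decide)
  obtain ⟨d, hd⟩ := hsome 4 (by decide)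
  obtain ⟨e, he⟩ := hsome 5 (by decide)
  have adj {i j : ZMod 6} {u v : V} : f i = some u → f j = some v → (G.Adj u v ↔ C6.Adj i j) :=
    addVertex.adj_iff_of_apply_eq_some f
  have mem {j : ZMod 6} {u : V} : f j = some u → (u ∈ I ↔ C6.Adj 0 j) :=
    addVertex.mem_iff_of_apply_eq_none f h0
  exact nonempty_K1plus2K2_embedding_of_path hK3 hind hmax
    ((adj ha hb).2 (by decide)) ((adj hb hc).2 (by decide)) ((adj hc hd).2 (by decide))
    ((adj hd he).2 (by decide)) ((adj ha hd).not.2 (by decide)) ((adj ha he).not.2 (by decide))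
    ((adj hb hd).not.2 (by decide)) ((adj hb he).not.2 (by decide))
    ((mem ha).2 (by decide)) ((mem he).2 (by decide)) ((mem hc).not.2 (by decide))

end

theorem addVertex_C6_free_general {V : Type*} (G : SimpleGraph V) (I : Set V)
    (hK3 : G.CliqueFree 3)
    (hK1plus2K2 : ¬ Nonempty (K1plus2K2 ↪g G))
    (hC6 : ¬ Nonempty (C6 ↪g G))
    (hind : IsIndep G I)
    (hmax : ∀ J : Set V, IsIndep G J → I ⊆ J → J = I) :
    ¬ Nonempty (C6 ↪g addVertex G I) := by
  rintro ⟨f⟩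
  by_cases hnone : ∀ i, f i ≠ none
  · exact hC6 (addVertex.nonempty_embedding_of_forall_ne_none f hnone)
  obtain ⟨i, hi⟩ := not_forall_not.mp hnone
  refine hK1plus2K2 (nonempty_K1plus2K2_embedding_of_apply_zero_eq_none hK3 hind hmax
    (f.comp (rotateC6 i).toEmbedding) ?_)
  simpa [rotateC6] using hi

theorem addVertex_C6_free {V : Type*} [Fintype V] (G : SimpleGraph V) (I : Set V)
    (hK3 : G.CliqueFree 3)
    (hK1plus2K2 : ¬ Nonempty (K1plus2K2 ↪g G))
    (hC6 : ¬ Nonempty (C6 ↪g G))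
    (hind : IsIndep G I)
    (hmax : ∀ J : Set V, IsIndep G J → I ⊆ J → J = I) :
    ¬ Nonempty (C6 ↪g addVertex G I) :=
  addVertex_C6_free_general G I hK3 hK1plus2K2 hC6 hind hmax
end

section
/- Let G be a finite graph that is K_3-free, (K_1+2K_2)-free, and C_6-free (as induced subgraphs), and let I be a maximal independent set of G. Then every induced copy of 2K_2 in G contains at least one vertex of I. -/
/-!
A vertex outside the maximal independent set `I` has a neighbour in `I`. Suppose the induced
`2K₂` formed by `ab` and `uv` avoids `I`, and first let `w ∈ I` be adjacent to `a` and `u`;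
take `B, C ∈ I` adjacent to `b` and `v`. If `B ≁ v`, then either `C ∼ b` and `a w u v C b` is an
induced `C₆`, or `w` has no neighbour on the induced `2K₂` formed by `bB` and `vC`. So `B ∼ v`,
and `a b B v u w` is an induced `C₆`. Hence neighbours `A, B ∈ I` of `a, b` both miss `u` and
`v`, and `B` has no neighbour on the induced `2K₂` formed by `aA` and `uv`.
-/

namespace SimpleGraph

variable {V W : Type*} {G : SimpleGraph V}

lemma CliqueFree.not_adj_of_adj_of_adj_s6 (hG : G.CliqueFree 3) {x y z : V}
    (hxy : G.Adj x y) (hxz : G.Adj x z) : ¬ G.Adj y z := by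
  classical
  exact fun hyz => hG {x, y, z} (is3Clique_triple_iff.mpr ⟨hxy, hxz, hyz⟩)

lemma nonempty_embedding_of_adj_iff_s6 {H : SimpleGraph W} (hH : Function.Injective H.neighborSet)
    (f : W → V) (hf : ∀ i j, G.Adj (f i) (f j) ↔ H.Adj i j) : Nonempty (H ↪g G) :=
  ⟨⟨⟨f, fun i j hij => hH <| Set.ext fun k => by simp only [mem_neighborSet, ← hf, hij]⟩,
    hf _ _⟩⟩

end SimpleGraph

open SimpleGraph

lemma C6_neighborSet_injective : Function.Injective C6.neighborSet := fun i j h => by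
  have key : ∀ i j : ZMod 6, (∀ k, C6.Adj i k ↔ C6.Adj j k) → i = j := by
    simp only [C6, fromRel_adj]
    decide
  exact key i j fun k => Set.ext_iff.mp h k

lemma K1plus2K2_neighborSet_injective : Function.Injective K1plus2K2.neighborSet := fun i j h => by
  have key : ∀ i j : Fin 5, (∀ k, K1plus2K2.Adj i k ↔ K1plus2K2.Adj j k) → i = j := by
    simp only [K1plus2K2, fromRel_adj]
    decide
  exact key i j fun k => Set.ext_iff.mp h k

section

variable {V : Type*} {G : SimpleGraph V}

lemma nonempty_C6_embedding {x₀ x₁ x₂ x₃ x₄ x₅ : V}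
    (h₀₁ : G.Adj x₀ x₁) (h₁₂ : G.Adj x₁ x₂) (h₂₃ : G.Adj x₂ x₃)
    (h₃₄ : G.Adj x₃ x₄) (h₄₅ : G.Adj x₄ x₅) (h₅₀ : G.Adj x₅ x₀)
    (h₀₂ : ¬ G.Adj x₀ x₂) (h₀₃ : ¬ G.Adj x₀ x₃) (h₀₄ : ¬ G.Adj x₀ x₄)
    (h₁₃ : ¬ G.Adj x₁ x₃) (h₁₄ : ¬ G.Adj x₁ x₄) (h₁₅ : ¬ G.Adj x₁ x₅)
    (h₂₄ : ¬ G.Adj x₂ x₄) (h₂₅ : ¬ G.Adj x₂ x₅) (h₃₅ : ¬ G.Adj x₃ x₅) :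
    Nonempty (C6 ↪g G) := by
  refine nonempty_embedding_of_adj_iff_s6 C6_neighborSet_injective ![x₀, x₁, x₂, x₃, x₄, x₅] ?_
  have cases : ∀ i : ZMod 6, i = 0 ∨ i = 1 ∨ i = 2 ∨ i = 3 ∨ i = 4 ∨ i = 5 := by decide
  intro i j
  -- `G.adj_comm` orients the adjacencies in the hypotheses and in the goal alike
  rcases cases i with rfl | rfl | rfl | rfl | rfl | rfl <;>
    rcases cases j with rfl | rfl | rfl | rfl | rfl | rfl <;>
    simp_all +decide [C6, G.adj_comm]

structure IsInduced2K2 (G : SimpleGraph V) (a b u v : V) : Prop where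
  adj_left : G.Adj a b
  adj_right : G.Adj u v
  not_adj_au : ¬ G.Adj a u
  not_adj_av : ¬ G.Adj a v
  not_adj_bu : ¬ G.Adj b u
  not_adj_bv : ¬ G.Adj b v

lemma IsInduced2K2.nonempty_K1plus2K2_embedding {a b u v z : V} (h : IsInduced2K2 G a b u v)
    (hza : ¬ G.Adj z a) (hzb : ¬ G.Adj z b) (hzu : ¬ G.Adj z u) (hzv : ¬ G.Adj z v) :
    Nonempty (K1plus2K2 ↪g G) := by
  obtain ⟨hab, huv, hau, hav, hbu, hbv⟩ := h
  refine nonempty_embedding_of_adj_iff_s6 K1plus2K2_neighborSet_injective ![z, a, b, u, v] ?_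
  intro i j
  fin_cases i <;> fin_cases j <;> simp_all [K1plus2K2, G.adj_comm]

lemma IsInduced2K2.swap_left {a b u v : V} (h : IsInduced2K2 G a b u v) :
    IsInduced2K2 G b a u v :=
  ⟨h.adj_left.symm, h.adj_right, h.not_adj_bu, h.not_adj_bv, h.not_adj_au, h.not_adj_av⟩

lemma IsInduced2K2.swap_right {a b u v : V} (h : IsInduced2K2 G a b u v) :
    IsInduced2K2 G a b v u :=
  ⟨h.adj_left, h.adj_right.symm, h.not_adj_av, h.not_adj_au, h.not_adj_bv, h.not_adj_bu⟩

lemma IsIndep.exists_adj_of_maximal {I : Set V} (hind : IsIndep G I)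
    (hmax : ∀ J : Set V, IsIndep G J → I ⊆ J → J = I) {x : V} (hx : x ∉ I) :
    ∃ y ∈ I, G.Adj y x := by
  by_contra! h
  have hJ : IsIndep G (insert x I) := by
    rintro p (rfl | hp) q (rfl | hq) hpq
    · exact G.irrefl hpq
    · exact h q hq hpq.symm
    · exact h p hp hpq
    · exact hind p hp q hq hpq
  exact hx (hmax _ hJ (Set.subset_insert x I) ▸ Set.mem_insert x I)

lemma IsInduced2K2.not_adj_of_mem_of_adj {I : Set V} {a b u v w : V} (hK3 : G.CliqueFree 3)
    (hK1plus2K2 : ¬ Nonempty (K1plus2K2 ↪g G)) (hC6 : ¬ Nonempty (C6 ↪g G))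
    (hind : IsIndep G I) (hdom : ∀ x ∉ I, ∃ y ∈ I, G.Adj y x)
    (h : IsInduced2K2 G a b u v) (hb : b ∉ I) (hv : v ∉ I) (hw : w ∈ I) (hwa : G.Adj w a) :
    ¬ G.Adj w u := by
  intro hwu
  obtain ⟨hab, huv, hau, hav, hbu, hbv⟩ := h
  have hwb : ¬ G.Adj w b := hK3.not_adj_of_adj_of_adj_s6 hwa.symm hab
  have hwv : ¬ G.Adj w v := hK3.not_adj_of_adj_of_adj_s6 hwu.symm huv
  obtain ⟨B, hB, hBb⟩ := hdom b hb
  obtain ⟨C, hC, hCv⟩ := hdom v hv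
  have hBa : ¬ G.Adj B a := hK3.not_adj_of_adj_of_adj_s6 hBb.symm hab.symm
  have hCu : ¬ G.Adj C u := hK3.not_adj_of_adj_of_adj_s6 hCv.symm huv.symm
  have hBv : G.Adj B v := by
    by_contra hBv
    have hCb : ¬ G.Adj C b := fun hCb => hC6 <|
      nonempty_C6_embedding hwa.symm hwu huv hCv.symm hCb hab.symm hau hav
        (hK3.not_adj_of_adj_of_adj_s6 hab.symm hCb.symm) hwv (hind w hw C hC) hwb
        (fun h => hCu h.symm) (fun h => hbu h.symm) (fun h => hbv h.symm)
    have hbBvC : IsInduced2K2 G b B v C :=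
      ⟨hBb.symm, hCv.symm, hbv, fun h => hCb h.symm, hBv, hind B hB C hC⟩
    exact hK1plus2K2 (hbBvC.nonempty_K1plus2K2_embedding hwb (hind w hw B hB) hwv (hind w hw C hC))
  exact hC6 <| nonempty_C6_embedding hab hBb.symm hBv huv.symm hwu.symm hwa
    (fun h => hBa h.symm) hav hau hbv hbu (fun h => hwb h.symm)
    (hK3.not_adj_of_adj_of_adj_s6 hBv.symm huv.symm) (hind B hB w hw) (fun h => hwv h.symm)

end

theorem induced_2K2_meets_maxIndep_general {V : Type*} (G : SimpleGraph V) (I : Set V)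
    (hK3 : G.CliqueFree 3)
    (hK1plus2K2 : ¬ Nonempty (K1plus2K2 ↪g G))
    (hC6 : ¬ Nonempty (C6 ↪g G))
    (hind : IsIndep G I)
    (hmax : ∀ J : Set V, IsIndep G J → I ⊆ J → J = I) :
    ∀ a b u v : V, a ≠ b → a ≠ u → a ≠ v → b ≠ u → b ≠ v → u ≠ v →
      G.Adj a b → G.Adj u v →
      ¬ G.Adj a u → ¬ G.Adj a v → ¬ G.Adj b u → ¬ G.Adj b v →
      (a ∈ I ∨ b ∈ I ∨ u ∈ I ∨ v ∈ I) := by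
  intro a b u v _ _ _ _ _ _ hab huv hau hav hbu hbv
  have h : IsInduced2K2 G a b u v := ⟨hab, huv, hau, hav, hbu, hbv⟩
  have hdom : ∀ x ∉ I, ∃ y ∈ I, G.Adj y x := fun _ hx => hind.exists_adj_of_maximal hmax hx
  have hmiss := fun {a b u v w : V} (h : IsInduced2K2 G a b u v) =>
    h.not_adj_of_mem_of_adj hK3 hK1plus2K2 hC6 hind hdom (w := w)
  by_contra! ⟨ha, hb, hu, hv⟩
  obtain ⟨A, hA, hAa⟩ := hdom a ha
  obtain ⟨B, hB, hBb⟩ := hdom b hb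
  have haAuv : IsInduced2K2 G a A u v :=
    ⟨hAa.symm, huv, hau, hav, hmiss h hb hv hA hAa, hmiss h.swap_right hb hu hA hAa⟩
  exact hK1plus2K2 <| haAuv.nonempty_K1plus2K2_embedding
    (hK3.not_adj_of_adj_of_adj_s6 hBb.symm hab.symm) (hind B hB A hA)
    (hmiss h.swap_left ha hv hB hBb) (hmiss h.swap_left.swap_right ha hu hB hBb)

/-- Every induced copy of `2K₂` in `G` (four vertices `a,b,u,v` with exactly the two
edges `ab` and `uv`) contains at least one vertex of the maximal independent set `I`. -/
theorem induced_2K2_meets_maxIndep {V : Type*} [Fintype V] (G : SimpleGraph V) (I : Set V)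
    (hK3 : G.CliqueFree 3)
    (hK1plus2K2 : ¬ Nonempty (K1plus2K2 ↪g G))
    (hC6 : ¬ Nonempty (C6 ↪g G))
    (hind : IsIndep G I)
    (hmax : ∀ J : Set V, IsIndep G J → I ⊆ J → J = I) :
    ∀ a b u v : V, a ≠ b → a ≠ u → a ≠ v → b ≠ u → b ≠ v → u ≠ v →
      G.Adj a b → G.Adj u v →
      ¬ G.Adj a u → ¬ G.Adj a v → ¬ G.Adj b u → ¬ G.Adj b v →
      (a ∈ I ∨ b ∈ I ∨ u ∈ I ∨ v ∈ I) :=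
  induced_2K2_meets_maxIndep_general G I hK3 hK1plus2K2 hC6 hind hmax
end

section
/- Let G be a finite triangle-free, (K_1+2K_2)-free, (K_1+C_5)-free, C_6-free graph that is point-incomparable, and let x,y be distinct non-adjacent vertices. If G+xy is triangle-free, then G+xy is (K_1+2K_2)-free. -/
set_option maxHeartbeats 1000000

lemma noTri {V : Type*} (G : SimpleGraph V) (hK3 : G.CliqueFree 3) {a b c : V}
    (hab : G.Adj a b) (hac : G.Adj a c) (hbc : G.Adj b c) : False := by
  classical
  exact hK3 {a, b, c} (SimpleGraph.is3Clique_iff.mpr ⟨a, b, c, hab, hac, hbc, rfl⟩)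

lemma emb2K2 {V : Type*} (G : SimpleGraph V) (v0 v1 v2 v3 v4 : V)
    (ne01 : v0 ≠ v1) (ne02 : v0 ≠ v2) (ne03 : v0 ≠ v3) (ne04 : v0 ≠ v4)
    (ne12 : v1 ≠ v2) (ne13 : v1 ≠ v3) (ne14 : v1 ≠ v4)
    (ne23 : v2 ≠ v3) (ne24 : v2 ≠ v4) (ne34 : v3 ≠ v4)
    (a12 : G.Adj v1 v2) (a34 : G.Adj v3 v4)
    (n01 : ¬ G.Adj v0 v1) (n02 : ¬ G.Adj v0 v2) (n03 : ¬ G.Adj v0 v3) (n04 : ¬ G.Adj v0 v4)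
    (n13 : ¬ G.Adj v1 v3) (n14 : ¬ G.Adj v1 v4) (n23 : ¬ G.Adj v2 v3) (n24 : ¬ G.Adj v2 v4) :
    Nonempty (K1plus2K2 ↪g G) := by
  refine ⟨⟨⟨![v0,v1,v2,v3,v4], ?_⟩, ?_⟩⟩
  · intro p q h
    fin_cases p <;> fin_cases q <;> simp_all
  · intro p q
    fin_cases p <;> fin_cases q <;>
      simp only [Matrix.cons_val_zero, Matrix.cons_val_one, Matrix.head_cons, Fin.mk_one,
        Matrix.cons_val', Matrix.cons_val_fin_one, Matrix.empty_val', Fin.isValue,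
        Matrix.cons_val_two, Matrix.tail_cons, Matrix.cons_val_three, Matrix.cons_val_four,
        K1plus2K2, SimpleGraph.fromRel_adj] <;>
      simp (config := { decide := true }) <;>
      first
        | exact G.irrefl
        | assumption
        | exact a12.symm
        | exact a34.symm
        | exact fun h => n01 h.symm
        | exact fun h => n02 h.symm
        | exact fun h => n03 h.symm
        | exact fun h => n04 h.symm
        | exact fun h => n13 h.symm
        | exact fun h => n14 h.symm
        | exact fun h => n23 h.symm
        | exact fun h => n24 h.symm

lemma embC5 {V : Type*} (G : SimpleGraph V) (v0 v1 v2 v3 v4 v5 : V)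
    (ne01 : v0 ≠ v1) (ne02 : v0 ≠ v2) (ne03 : v0 ≠ v3) (ne04 : v0 ≠ v4) (ne05 : v0 ≠ v5)
    (ne12 : v1 ≠ v2) (ne13 : v1 ≠ v3) (ne14 : v1 ≠ v4) (ne15 : v1 ≠ v5)
    (ne23 : v2 ≠ v3) (ne24 : v2 ≠ v4) (ne25 : v2 ≠ v5)
    (ne34 : v3 ≠ v4) (ne35 : v3 ≠ v5) (ne45 : v4 ≠ v5)
    (a12 : G.Adj v1 v2) (a23 : G.Adj v2 v3) (a34 : G.Adj v3 v4) (a45 : G.Adj v4 v5)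
    (a51 : G.Adj v5 v1)
    (n01 : ¬ G.Adj v0 v1) (n02 : ¬ G.Adj v0 v2) (n03 : ¬ G.Adj v0 v3) (n04 : ¬ G.Adj v0 v4)
    (n05 : ¬ G.Adj v0 v5)
    (n13 : ¬ G.Adj v1 v3) (n14 : ¬ G.Adj v1 v4) (n24 : ¬ G.Adj v2 v4) (n25 : ¬ G.Adj v2 v5)
    (n35 : ¬ G.Adj v3 v5) :
    Nonempty (K1plusC5 ↪g G) := by
  have e0 : (![v0,v1,v2,v3,v4,v5] : Fin 6 → V) 0 = v0 := rfl
  have e1 : (![v0,v1,v2,v3,v4,v5] : Fin 6 → V) 1 = v1 := rfl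
  have e2 : (![v0,v1,v2,v3,v4,v5] : Fin 6 → V) 2 = v2 := rfl
  have e3 : (![v0,v1,v2,v3,v4,v5] : Fin 6 → V) 3 = v3 := rfl
  have e4 : (![v0,v1,v2,v3,v4,v5] : Fin 6 → V) 4 = v4 := rfl
  have e5 : (![v0,v1,v2,v3,v4,v5] : Fin 6 → V) 5 = v5 := rfl
  refine ⟨⟨⟨![v0,v1,v2,v3,v4,v5], ?_⟩, ?_⟩⟩
  · intro p q h
    fin_cases p <;> fin_cases q <;>
      simp only [e0, e1, e2, e3, e4, e5, Fin.isValue] at h <;> first | rfl | simp_all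
  · intro p q
    fin_cases p <;> fin_cases q <;>
      simp only [e0, e1, e2, e3, e4, e5, Fin.isValue, K1plusC5, SimpleGraph.fromRel_adj] <;>
      simp (config := { decide := true }) <;>
      first
        | exact G.irrefl
        | assumption
        | exact a12.symm
        | exact a23.symm
        | exact a34.symm
        | exact a45.symm
        | exact a51.symm
        | exact fun h => n01 h.symm
        | exact fun h => n02 h.symm
        | exact fun h => n03 h.symm
        | exact fun h => n04 h.symm
        | exact fun h => n05 h.symm
        | exact fun h => n13 h.symm
        | exact fun h => n14 h.symm
        | exact fun h => n24 h.symm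
        | exact fun h => n25 h.symm
        | exact fun h => n35 h.symm

lemma key_s15 {V : Type*} (G : SimpleGraph V)
    (hK3 : G.CliqueFree 3)
    (h22 : ¬ Nonempty (K1plus2K2 ↪g G))
    (h15 : ¬ Nonempty (K1plusC5 ↪g G))
    (hpi : ∀ u v : V, u ≠ v → ¬ (G.neighborSet u ⊆ G.neighborSet v))
    (a x y d e : V)
    (nax : a ≠ x) (nay : a ≠ y) (nad : a ≠ d) (nae : a ≠ e)
    (nxy : x ≠ y) (nxd : x ≠ d) (nxe : x ≠ e) (nyd : y ≠ d) (nye : y ≠ e)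
    (hde : G.Adj d e)
    (hax : ¬ G.Adj a x) (hay : ¬ G.Adj a y) (had : ¬ G.Adj a d) (hae : ¬ G.Adj a e)
    (hxy : ¬ G.Adj x y) (hxd : ¬ G.Adj x d) (hxe : ¬ G.Adj x e)
    (hyd : ¬ G.Adj y d) (hye : ¬ G.Adj y e)
    (hdisj : ∀ z, G.Adj x z → G.Adj y z → False) : False := by
  -- every neighbor of a is adjacent to d or e
  have F3 : ∀ w, G.Adj a w → G.Adj d w ∨ G.Adj e w := by
    intro w hw
    by_contra hcon
    push_neg at hcon
    obtain ⟨hwd, hwe⟩ := hcon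
    have wnx : w ≠ x := fun h => hax (h ▸ hw)
    have wny : w ≠ y := fun h => hay (h ▸ hw)
    have wnd : w ≠ d := fun h => had (h ▸ hw)
    have wne : w ≠ e := fun h => hae (h ▸ hw)
    by_cases hxw : G.Adj x w
    · have hyw : ¬ G.Adj y w := fun h => hdisj w hxw h
      exact h22 (emb2K2 G y a w d e nay.symm wny.symm nyd nye hw.ne nad nae wnd wne hde.ne
        hw hde (fun h => hay h.symm) hyw hyd hye had hae
        (fun h => hwd h.symm) (fun h => hwe h.symm))
    · exact h22 (emb2K2 G x a w d e nax.symm wnx.symm nxd nxe hw.ne nad nae wnd wne hde.ne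
        hw hde (fun h => hax h.symm) hxw hxd hxe had hae
        (fun h => hwd h.symm) (fun h => hwe h.symm))
  -- every neighbor of x is adjacent to d or e
  have G1 : ∀ z, G.Adj x z → G.Adj d z ∨ G.Adj e z := by
    intro z hz
    by_contra hcon
    push_neg at hcon
    obtain ⟨hzd, hze⟩ := hcon
    have zny : z ≠ y := fun h => hxy (h ▸ hz)
    have znd : z ≠ d := fun h => hxd (h ▸ hz)
    have zne : z ≠ e := fun h => hxe (h ▸ hz)
    have zna : z ≠ a := fun h => hax ((h ▸ hz).symm)
    have hyz : ¬ G.Adj y z := fun h => hdisj z hz h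
    by_cases hza : G.Adj a z
    · exact h22 (emb2K2 G y a z d e nay.symm zny.symm nyd nye hza.ne nad nae znd zne hde.ne
        hza hde (fun h => hay h.symm) hyz hyd hye had hae
        (fun h => hzd h.symm) (fun h => hze h.symm))
    · exact h22 (emb2K2 G a x z d e nax zna.symm nad nae hz.ne nxd nxe znd zne hde.ne
        hz hde hax hza had hae hxd hxe
        (fun h => hzd h.symm) (fun h => hze h.symm))
  -- get s ∈ N(a) \ N(d) and t ∈ N(a) \ N(e)
  obtain ⟨s, hs1, hs2⟩ : ∃ s, G.Adj a s ∧ ¬ G.Adj d s := by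
    obtain ⟨s, hs1, hs2⟩ := Set.not_subset.mp (hpi a d nad)
    exact ⟨s, (G.mem_neighborSet a s).mp hs1, fun h => hs2 ((G.mem_neighborSet d s).mpr h)⟩
  obtain ⟨t, ht1, ht2⟩ : ∃ t, G.Adj a t ∧ ¬ G.Adj e t := by
    obtain ⟨t, ht1, ht2⟩ := Set.not_subset.mp (hpi a e nae)
    exact ⟨t, (G.mem_neighborSet a t).mp ht1, fun h => ht2 ((G.mem_neighborSet e t).mpr h)⟩
  have hse : G.Adj e s := (F3 s hs1).resolve_left hs2
  have htd : G.Adj d t := (F3 t ht1).resolve_right ht2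
  have hst : ¬ G.Adj s t := fun h => noTri G hK3 hs1 ht1 h
  have snx : s ≠ x := fun h => hax (h ▸ hs1)
  have sny : s ≠ y := fun h => hay (h ▸ hs1)
  have snd : s ≠ d := fun h => had (h ▸ hs1)
  have sne : s ≠ e := fun h => hae (h ▸ hs1)
  have tnx : t ≠ x := fun h => hax (h ▸ ht1)
  have tny : t ≠ y := fun h => hay (h ▸ ht1)
  have tnd : t ≠ d := fun h => had (h ▸ ht1)
  have tne : t ≠ e := fun h => hae (h ▸ ht1)
  have snt : s ≠ t := fun h => ht2 (h ▸ hse)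
  by_cases hxs : G.Adj x s
  · -- then N(x) ⊆ N(e), contradicting point-incomparability
    apply hpi x e nxe
    intro z hz
    rw [SimpleGraph.mem_neighborSet] at hz ⊢
    by_contra hez
    have hdz : G.Adj d z := (G1 z hz).resolve_right hez
    have zns : z ≠ s := fun h => hez (h ▸ hse)
    have hsz : ¬ G.Adj s z := fun h => noTri G hK3 hxs hz h
    have zny : z ≠ y := fun h => hxy (h ▸ hz)
    have znd : z ≠ d := fun h => hxd (h ▸ hz)
    have zne : z ≠ e := fun h => hxe (h ▸ hz)
    have hyz : ¬ G.Adj y z := fun h => hdisj z hz h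
    have hys : ¬ G.Adj y s := fun h => hdisj s hxs h
    -- K1+C5 : apex y, cycle x-s-e-d-z
    exact h15 (embC5 G y x s e d z
      nxy.symm sny.symm nye nyd zny.symm
      snx.symm nxe nxd hz.ne
      sne snd zns.symm
      hde.ne' zne.symm hdz.ne
      hxs hse.symm hde.symm hdz hz.symm
      (fun h => hxy h.symm) hys hye hyd hyz
      hxe hxd (fun h => hs2 h.symm) hsz hez)
  by_cases hxt : G.Adj x t
  · -- then N(x) ⊆ N(d), contradicting point-incomparability
    apply hpi x d nxd
    intro z hz
    rw [SimpleGraph.mem_neighborSet] at hz ⊢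
    by_contra hdz
    have hez : G.Adj e z := (G1 z hz).resolve_left hdz
    have znt : z ≠ t := fun h => ht2 (h ▸ hez)
    have htz : ¬ G.Adj t z := fun h => noTri G hK3 hxt hz h
    have zny : z ≠ y := fun h => hxy (h ▸ hz)
    have znd : z ≠ d := fun h => hxd (h ▸ hz)
    have zne : z ≠ e := fun h => hxe (h ▸ hz)
    have hyz : ¬ G.Adj y z := fun h => hdisj z hz h
    have hyt : ¬ G.Adj y t := fun h => hdisj t hxt h
    -- K1+C5 : apex y, cycle x-t-d-e-z
    exact h15 (embC5 G y x t d e z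
      nxy.symm tny.symm nyd nye zny.symm
      tnx.symm nxd nxe hz.ne
      tnd tne znt.symm
      hde.ne znd.symm hez.ne
      hxt htd.symm hde hez hz.symm
      (fun h => hxy h.symm) hyt hyd hye hyz
      hxd hxe (fun h => ht2 h.symm) htz hdz)
  · -- x nonadjacent to the induced C5 a-s-e-d-t : K1+C5 with apex x
    exact h15 (embC5 G x a s e d t
      nax.symm snx.symm nxe nxd tnx.symm
      hs1.ne nae nad ht1.ne
      sne snd snt
      hde.ne' tne.symm htd.ne
      hs1 hse.symm hde.symm htd ht1.symm
      (fun h => hax h.symm) hxs hxe hxd hxt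
      hae had (fun h => hs2 h.symm) hst ht2)

theorem addEdge_K1plus2K2_free {V : Type*} [Fintype V] (G : SimpleGraph V)
    (hK3 : G.CliqueFree 3)
    (hK1plus2K2 : ¬ Nonempty (K1plus2K2 ↪g G))
    (hK1plusC5 : ¬ Nonempty (K1plusC5 ↪g G))
    (hC6 : ¬ Nonempty (C6 ↪g G))
    (hpi : ∀ u v : V, u ≠ v → ¬ (G.neighborSet u ⊆ G.neighborSet v))
    (x y : V) (hxy : x ≠ y) (hnadj : ¬ G.Adj x y)
    (htf : (G ⊔ SimpleGraph.fromEdgeSet {s(x, y)}).CliqueFree 3) :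
    ¬ Nonempty (K1plus2K2 ↪g (G ⊔ SimpleGraph.fromEdgeSet {s(x, y)})) := by
  rintro ⟨f⟩
  set G' := G ⊔ SimpleGraph.fromEdgeSet {s(x, y)} with hG'
  -- the new graph is K1+2K2-free follows from the key lemma
  have hxyG' : G'.Adj x y := by
    rw [hG', SimpleGraph.sup_adj]
    exact Or.inr (by rw [SimpleGraph.fromEdgeSet_adj]; exact ⟨rfl, hxy⟩)
  -- G is K1+C5-free: hK1plusC5, G K1+2K2-free: hK1plus2K2
  have hdisj : ∀ u v : V, G'.Adj u v → ∀ z, G.Adj u z → G.Adj v z → False := by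
    intro u v huv z h1 h2
    exact noTri G' htf huv
      ((SimpleGraph.sup_adj _ _ _ _).mpr (Or.inl h1))
      ((SimpleGraph.sup_adj _ _ _ _).mpr (Or.inl h2))
  -- extract adjacency data from the embedding f
  have hadj : ∀ p q : Fin 5, K1plus2K2.Adj p q → G'.Adj (f p) (f q) := fun p q h =>
    f.map_adj_iff.mpr h
  have hnon : ∀ p q : Fin 5, ¬ K1plus2K2.Adj p q → ¬ G.Adj (f p) (f q) := by
    intro p q h hG
    exact h (f.map_adj_iff.mp ((SimpleGraph.sup_adj _ _ _ _).mpr (Or.inl hG)))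
  have hK12 : K1plus2K2.Adj 1 2 := by
    rw [K1plus2K2, SimpleGraph.fromRel_adj]; refine ⟨by decide, Or.inl (Or.inl ⟨rfl, rfl⟩)⟩
  have hK34 : K1plus2K2.Adj 3 4 := by
    rw [K1plus2K2, SimpleGraph.fromRel_adj]; refine ⟨by decide, Or.inl (Or.inr ⟨rfl, rfl⟩)⟩
  have hKn : ∀ p q : Fin 5, ¬((p = 1 ∧ q = 2) ∨ (p = 3 ∧ q = 4) ∨ (q = 1 ∧ p = 2) ∨ (q = 3 ∧ p = 4)) → ¬ K1plus2K2.Adj p q := by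
    intro p q h hA
    rw [K1plus2K2, SimpleGraph.fromRel_adj] at hA
    rcases hA with ⟨-, hA | hA⟩ <;> rcases hA with h' | h' <;> tauto
  -- non-adjacencies in G
  have n01 : ¬ G.Adj (f 0) (f 1) := hnon 0 1 (hKn 0 1 (by decide))
  have n02 : ¬ G.Adj (f 0) (f 2) := hnon 0 2 (hKn 0 2 (by decide))
  have n03 : ¬ G.Adj (f 0) (f 3) := hnon 0 3 (hKn 0 3 (by decide))
  have n04 : ¬ G.Adj (f 0) (f 4) := hnon 0 4 (hKn 0 4 (by decide))
  have n13 : ¬ G.Adj (f 1) (f 3) := hnon 1 3 (hKn 1 3 (by decide))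
  have n14 : ¬ G.Adj (f 1) (f 4) := hnon 1 4 (hKn 1 4 (by decide))
  have n23 : ¬ G.Adj (f 2) (f 3) := hnon 2 3 (hKn 2 3 (by decide))
  have n24 : ¬ G.Adj (f 2) (f 4) := hnon 2 4 (hKn 2 4 (by decide))
  -- distinctness
  have ne01 : f 0 ≠ f 1 := fun h => absurd (f.injective h) (by decide)
  have ne02 : f 0 ≠ f 2 := fun h => absurd (f.injective h) (by decide)
  have ne03 : f 0 ≠ f 3 := fun h => absurd (f.injective h) (by decide)
  have ne04 : f 0 ≠ f 4 := fun h => absurd (f.injective h) (by decide)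
  have ne12 : f 1 ≠ f 2 := fun h => absurd (f.injective h) (by decide)
  have ne13 : f 1 ≠ f 3 := fun h => absurd (f.injective h) (by decide)
  have ne14 : f 1 ≠ f 4 := fun h => absurd (f.injective h) (by decide)
  have ne23 : f 2 ≠ f 3 := fun h => absurd (f.injective h) (by decide)
  have ne24 : f 2 ≠ f 4 := fun h => absurd (f.injective h) (by decide)
  have ne34 : f 3 ≠ f 4 := fun h => absurd (f.injective h) (by decide)
  -- decompose the two edges
  have a12 := hadj 1 2 hK12
  have a34 := hadj 3 4 hK34
  simp only [hG', SimpleGraph.sup_adj, SimpleGraph.fromEdgeSet_adj, Set.mem_singleton_iff,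
    Sym2.eq_iff] at a12 a34
  have hdisjxy : ∀ z, G.Adj x z → G.Adj y z → False := hdisj x y hxyG'
  have hdisjyx : ∀ z, G.Adj y z → G.Adj x z → False := fun z h1 h2 => hdisjxy z h2 h1
  rcases a12 with a12 | ⟨h12, -⟩
  · rcases a34 with a34 | ⟨h34, -⟩
    · -- both edges in G : K1+2K2 in G
      exact hK1plus2K2 (emb2K2 G (f 0) (f 1) (f 2) (f 3) (f 4)
        ne01 ne02 ne03 ne04 ne12 ne13 ne14 ne23 ne24 ne34
        a12 a34 n01 n02 n03 n04 n13 n14 n23 n24)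
    · -- edge 3-4 is the new edge {x,y}, edge 1-2 in G
      rcases h34 with ⟨h3, h4⟩ | ⟨h3, h4⟩
      · exact key_s15 G hK3 hK1plus2K2 hK1plusC5 hpi (f 0) (f 3) (f 4) (f 1) (f 2)
          ne03 ne04 ne01 ne02 ne34 ne13.symm ne23.symm ne14.symm ne24.symm
          a12
          n03 n04 n01 n02
          (by rw [h3, h4]; exact hnadj) (fun h => n13 h.symm) (fun h => n23 h.symm)
          (fun h => n14 h.symm) (fun h => n24 h.symm)
          (by rw [h3, h4]; exact hdisjxy)
      · exact key_s15 G hK3 hK1plus2K2 hK1plusC5 hpi (f 0) (f 3) (f 4) (f 1) (f 2)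
          ne03 ne04 ne01 ne02 ne34 ne13.symm ne23.symm ne14.symm ne24.symm
          a12
          n03 n04 n01 n02
          (by rw [h3, h4]; exact fun h => hnadj h.symm) (fun h => n13 h.symm) (fun h => n23 h.symm)
          (fun h => n14 h.symm) (fun h => n24 h.symm)
          (by rw [h3, h4]; exact hdisjyx)
  · rcases a34 with a34 | ⟨h34, -⟩
    · -- edge 1-2 is the new edge {x,y}, edge 3-4 in G
      rcases h12 with ⟨h1, h2⟩ | ⟨h1, h2⟩
      · exact key_s15 G hK3 hK1plus2K2 hK1plusC5 hpi (f 0) (f 1) (f 2) (f 3) (f 4)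
          ne01 ne02 ne03 ne04 ne12 ne13 ne14 ne23 ne24
          a34
          n01 n02 n03 n04
          (by rw [h1, h2]; exact hnadj) n13 n14 n23 n24
          (by rw [h1, h2]; exact hdisjxy)
      · exact key_s15 G hK3 hK1plus2K2 hK1plusC5 hpi (f 0) (f 1) (f 2) (f 3) (f 4)
          ne01 ne02 ne03 ne04 ne12 ne13 ne14 ne23 ne24
          a34
          n01 n02 n03 n04
          (by rw [h1, h2]; exact fun h => hnadj h.symm) n13 n14 n23 n24
          (by rw [h1, h2]; exact hdisjyx)
    · -- both edges equal {x,y} : contradicts injectivity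
      rcases h12 with ⟨h1, h2⟩ | ⟨h1, h2⟩ <;> rcases h34 with ⟨h3, h4⟩ | ⟨h3, h4⟩
      · exact absurd (f.injective (h1.trans h3.symm)) (by decide)
      · exact absurd (f.injective (h1.trans h4.symm)) (by decide)
      · exact absurd (f.injective (h1.trans h4.symm)) (by decide)
      · exact absurd (f.injective (h1.trans h3.symm)) (by decide)
end

section
/- In the circular complete graph K_{3k-1,k} (k a positive integer), for any three pairwise non-adjacent vertices x,y,z there exists an ordering of them, say (a,b,c), such that every neighbour of b is a neighbour of a or of c. -/
lemma cc_adj_iff (k : ℕ) (hk : 0 < k) (u v : Fin (3 * k - 1)) :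
    (circularComplete (3 * k - 1) k).Adj u v ↔
      (u.val ≠ v.val ∧ ((k ≤ v.val - u.val ∧ v.val - u.val ≤ 2 * k - 1) ∨
        (k ≤ u.val - v.val ∧ u.val - v.val ≤ 2 * k - 1))) := by
  simp only [circularComplete, SimpleGraph.fromRel_adj, ne_eq, Fin.ext_iff]
  rw [abs_sub_comm ((v.val : ℤ)) (u.val : ℤ)]
  rcases abs_cases ((u.val : ℤ) - v.val) with ⟨h1, h2⟩ | ⟨h1, h2⟩ <;> rw [h1] <;> omega

set_option maxHeartbeats 1600000 in
lemma cc_key (k : ℕ) (hk : 0 < k)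
    (x y z : Fin (3 * k - 1)) (hxy : x ≠ y) (hxz : x ≠ z) (hyz : y ≠ z)
    (hs1 : x.val ≤ y.val) (hs2 : y.val ≤ z.val)
    (nxy : ¬ (circularComplete (3 * k - 1) k).Adj x y)
    (nxz : ¬ (circularComplete (3 * k - 1) k).Adj x z)
    (nyz : ¬ (circularComplete (3 * k - 1) k).Adj y z) :
    ∃ a b c : Fin (3 * k - 1),
      ({a, b, c} : Set (Fin (3 * k - 1))) = {x, y, z} ∧
      ∀ w : Fin (3 * k - 1), (circularComplete (3 * k - 1) k).Adj b w →
        (circularComplete (3 * k - 1) k).Adj a w ∨ (circularComplete (3 * k - 1) k).Adj c w := by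
  simp only [ne_eq, Fin.ext_iff] at hxy hxz hyz
  rw [cc_adj_iff k hk] at nxy nxz nyz
  have bx := x.isLt; have by' := y.isLt; have bz := z.isLt
  rcases lt_or_ge z.val (x.val + k) with h1 | h1
  · refine ⟨x, y, z, rfl, fun w hw => ?_⟩
    rw [cc_adj_iff k hk] at hw ⊢
    rw [cc_adj_iff k hk]
    have bw := w.isLt
    omega
  · rcases lt_or_ge y.val (x.val + k) with h2 | h2
    · refine ⟨z, x, y, ?_, fun w hw => ?_⟩
      · ext u; simp only [Set.mem_insert_iff, Set.mem_singleton_iff]; tauto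
      · rw [cc_adj_iff k hk] at hw ⊢
        rw [cc_adj_iff k hk]
        have bw := w.isLt
        omega
    · refine ⟨y, z, x, ?_, fun w hw => ?_⟩
      · ext u; simp only [Set.mem_insert_iff, Set.mem_singleton_iff]; tauto
      · rw [cc_adj_iff k hk] at hw ⊢
        rw [cc_adj_iff k hk]
        have bw := w.isLt
        omega

/-- In `K_{3k-1,k}`, for any three pairwise non-adjacent (distinct) vertices
`x, y, z` there is an ordering `(a, b, c)` of them such that every neighbour of
`b` is a neighbour of `a` or of `c`. -/
theorem circularComplete_betweenness (k : ℕ) (hk : 0 < k)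
    (x y z : Fin (3 * k - 1)) (hxy : x ≠ y) (hxz : x ≠ z) (hyz : y ≠ z)
    (nxy : ¬ (circularComplete (3 * k - 1) k).Adj x y)
    (nxz : ¬ (circularComplete (3 * k - 1) k).Adj x z)
    (nyz : ¬ (circularComplete (3 * k - 1) k).Adj y z) :
    ∃ a b c : Fin (3 * k - 1),
      ({a, b, c} : Set (Fin (3 * k - 1))) = {x, y, z} ∧
      ∀ w : Fin (3 * k - 1), (circularComplete (3 * k - 1) k).Adj b w →
        (circularComplete (3 * k - 1) k).Adj a w ∨ (circularComplete (3 * k - 1) k).Adj c w := by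
  have symm : ∀ u v, ¬ (circularComplete (3*k-1) k).Adj u v → ¬ (circularComplete (3*k-1) k).Adj v u :=
    fun u v h h' => h h'.symm
  have fix : ∀ (x' y' z' : Fin (3*k-1)), ({x', y', z'} : Set (Fin (3*k-1))) = {x, y, z} →
      (∃ a b c : Fin (3 * k - 1),
      ({a, b, c} : Set (Fin (3 * k - 1))) = {x', y', z'} ∧
      ∀ w : Fin (3 * k - 1), (circularComplete (3 * k - 1) k).Adj b w →
        (circularComplete (3 * k - 1) k).Adj a w ∨ (circularComplete (3 * k - 1) k).Adj c w) →
      (∃ a b c : Fin (3 * k - 1),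
      ({a, b, c} : Set (Fin (3 * k - 1))) = {x, y, z} ∧
      ∀ w : Fin (3 * k - 1), (circularComplete (3 * k - 1) k).Adj b w →
        (circularComplete (3 * k - 1) k).Adj a w ∨ (circularComplete (3 * k - 1) k).Adj c w) := by
    rintro x' y' z' he ⟨a, b, c, h1, h2⟩
    exact ⟨a, b, c, h1.trans he, h2⟩
  have perm : ∀ (u v w : Fin (3*k-1)), ({u,v,w} : Set (Fin (3*k-1))) = {x,y,z} ∨ True := fun _ _ _ => Or.inr trivial
  rcases le_total x.val y.val with h1 | h1 <;> rcases le_total y.val z.val with h2 | h2 <;>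
    rcases le_total x.val z.val with h3 | h3
  · exact cc_key k hk x y z hxy hxz hyz h1 h2 nxy nxz nyz
  · exact cc_key k hk x y z hxy hxz hyz h1 h2 nxy nxz nyz
  · exact fix x z y (by ext u; simp only [Set.mem_insert_iff, Set.mem_singleton_iff]; tauto)
      (cc_key k hk x z y hxz hxy (fun h => hyz h.symm) h3 h2 nxz nxy (symm _ _ nyz))
  · exact fix z x y (by ext u; simp only [Set.mem_insert_iff, Set.mem_singleton_iff]; tauto)
      (cc_key k hk z x y (fun h => hxz h.symm) (fun h => hyz h.symm) hxy h3 h1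
        (symm _ _ nxz) (symm _ _ nyz) nxy)
  · exact fix y x z (by ext u; simp only [Set.mem_insert_iff, Set.mem_singleton_iff]; tauto)
      (cc_key k hk y x z (fun h => hxy h.symm) hyz hxz h1 h3 (symm _ _ nxy) nyz nxz)
  · exact fix y z x (by ext u; simp only [Set.mem_insert_iff, Set.mem_singleton_iff]; tauto)
      (cc_key k hk y z x hyz (fun h => hxy h.symm) (fun h => hxz h.symm) h2 h3
        nyz (symm _ _ nxy) (symm _ _ nxz))
  · exact fix z y x (by ext u; simp only [Set.mem_insert_iff, Set.mem_singleton_iff]; tauto)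
      (cc_key k hk z y x (fun h => hyz h.symm) (fun h => hxz h.symm) (fun h => hxy h.symm)
        h2 h1 (symm _ _ nyz) (symm _ _ nxz) (symm _ _ nxy))
  · exact fix z y x (by ext u; simp only [Set.mem_insert_iff, Set.mem_singleton_iff]; tauto)
      (cc_key k hk z y x (fun h => hyz h.symm) (fun h => hxz h.symm) (fun h => hxy h.symm)
        h2 h1 (symm _ _ nyz) (symm _ _ nxz) (symm _ _ nxy))
end
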